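/- (Correctness of the RAW algorithm.) Let s ≥ 1 be a natural number dividing W and let x ∈ U. Suppose that for every ℓ ∈ {0, 1, …, W/s} a real number Â(ℓ) is given satisfying the fixed-window estimation guarantee f_x^{ℓ·s} ≤ Â(ℓ) ≤ f_x^{ℓ·s} + s. Then for all indices i ≤ j ≤ W, the RAW estimate v := Â(⌈j/s⌉) − Â(⌊i/s⌋) + s satisfies f_x^{i,j} ≤ v ≤ f_x^{i,j} + 4s. (With s = Wε/4 this says RAW answers every interval query with additive error at most Wε, i.e., it solves the (W,ε)-IntervalFrequency problem.) -/

import Mathlib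

/-!
Read `S` backwards: `f_x^w` counts `x` in the first `w` letters of the reversed stream, so it is
monotone in `w` and grows by at most `d` when `w` grows by `d`. Rounding `i` down and `j` up to
multiples of `s` moves each endpoint by at most `s`; together with the `s` slack of each estimate
this gives the error budget `4s`, and the additive `s` makes the estimate one-sided.
-/

/-- The `w`-frequency of `x`: the number of occurrences of `x` among the last `w`
elements of the stream `S`. -/
def freq {U : Type*} [DecidableEq U] (S : List U) (x : U) (w : ℕ) : ℕ :=
  (S.drop (S.length - w)).count x

namespace Nat

lemma le_ceilDiv_mul {b : ℕ} (a : ℕ) (hb : 0 < b) : a ≤ a ⌈/⌉ b * b := by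
  rw [mul_comm, ← smul_eq_mul]
  exact le_smul_ceilDiv hb

lemma ceilDiv_mul_lt_add {b : ℕ} (a : ℕ) (hb : 0 < b) : a ⌈/⌉ b * b < a + b := by
  have := Nat.div_mul_le_self (a + b - 1) b
  rw [ceilDiv_eq_add_pred_div]
  omega

end Nat

section freq

variable {U : Type*} [DecidableEq U] (S : List U) (x : U)

lemma freq_eq_count_take_reverse (w : ℕ) : freq S x w = (S.reverse.take w).count x := by
  rw [freq, List.take_reverse, List.count_reverse]

lemma freq_add (w d : ℕ) :
    freq S x (w + d) = freq S x w + ((S.reverse.drop w).take d).count x := by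
  simp only [freq_eq_count_take_reverse, List.take_add, List.count_append]

lemma freq_mono : Monotone (freq S x) := by
  intro u w huw
  obtain ⟨d, rfl⟩ := Nat.exists_eq_add_of_le huw
  rw [freq_add]
  exact Nat.le_add_right _ _

lemma freq_le_freq_add_of_le_add {u w d : ℕ} (h : w ≤ u + d) :
    freq S x w ≤ freq S x u + d :=
  calc freq S x w ≤ freq S x (u + d) := freq_mono S x h
    _ = freq S x u + ((S.reverse.drop u).take d).count x := freq_add S x u d
    _ ≤ freq S x u + d := by
      gcongr
      exact List.count_le_length.trans (List.length_take_le _ _)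

end freq

theorem raw_correctness_general {U : Type*} [DecidableEq U]
    (W s : ℕ) (hs : 1 ≤ s) (hsW : s ∣ W) (S : List U) (x : U)
    (A : ℕ → ℝ)
    (hA : ∀ ℓ ≤ W / s, (freq S x (ℓ * s) : ℝ) ≤ A ℓ ∧ A ℓ ≤ freq S x (ℓ * s) + s)
    (i j : ℕ) (hij : i ≤ j) (hjW : j ≤ W) :
    ((freq S x j : ℝ) - freq S x i) ≤ A (j ⌈/⌉ s) - A (i / s) + s ∧
      A (j ⌈/⌉ s) - A (i / s) + s ≤ ((freq S x j : ℝ) - freq S x i) + 4 * s := by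
  have hs₀ : 0 < s := hs
  obtain ⟨hAj₁, hAj₂⟩ := hA (j ⌈/⌉ s) <|
    (ceilDiv_le_iff_le_mul hs₀).2 (by rwa [Nat.mul_div_cancel' hsW])
  obtain ⟨hAi₁, hAi₂⟩ := hA (i / s) (Nat.div_le_div_right (hij.trans hjW))
  have hj₁ : (freq S x j : ℝ) ≤ freq S x (j ⌈/⌉ s * s) := by
    exact_mod_cast freq_mono S x (Nat.le_ceilDiv_mul j hs₀)
  have hj₂ : (freq S x (j ⌈/⌉ s * s) : ℝ) ≤ freq S x j + s := by
    exact_mod_cast freq_le_freq_add_of_le_add S x (Nat.ceilDiv_mul_lt_add j hs₀).le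
  have hi₁ : (freq S x (i / s * s) : ℝ) ≤ freq S x i := by
    exact_mod_cast freq_mono S x (Nat.div_mul_le_self i s)
  have hi₂ : (freq S x i : ℝ) ≤ freq S x (i / s * s) + s := by
    exact_mod_cast freq_le_freq_add_of_le_add S x (Nat.lt_div_mul_add hs₀).le
  constructor <;> linarith

/-- Correctness of the RAW algorithm: if for every `ℓ ≤ W/s` the black-box estimate
`A ℓ` satisfies `f_x^{ℓ·s} ≤ A ℓ ≤ f_x^{ℓ·s} + s`, then for all `i ≤ j ≤ W` the
RAW estimate `A(⌈j/s⌉) − A(⌊i/s⌋) + s` approximates `f_x^{i,j}` with additive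
error at most `4s` and never underestimates. -/
theorem raw_correctness {U : Type*} [DecidableEq U]
    (W s : ℕ) (hs : 1 ≤ s) (hsW : s ∣ W) (S : List U) (hS : S.length = W) (x : U)
    (A : ℕ → ℝ)
    (hA : ∀ ℓ ≤ W / s, (freq S x (ℓ * s) : ℝ) ≤ A ℓ ∧ A ℓ ≤ freq S x (ℓ * s) + s)
    (i j : ℕ) (hij : i ≤ j) (hjW : j ≤ W) :
    ((freq S x j : ℝ) - freq S x i) ≤ A (j ⌈/⌉ s) - A (i / s) + s ∧
      A (j ⌈/⌉ s) - A (i / s) + s ≤ ((freq S x j : ℝ) - freq S x i) + 4 * s :=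
  raw_correctness_general W s hs hsW S x A hA i j hij hjW
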